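/- arXiv:1904.00555 — 2 statements merged into one kernel-verified Lean document; each statement's English description precedes it below -/
import Mathlib

section
/- Let X = (X_1, ..., X_K) be a continuous random vector with joint c.d.f. F, and define Z_1 = F_1(X_1) and Z_k = F_k(X_k | X_1, ..., X_{k-1}) for k = 2, ..., K, where F_k(· | x_1, ..., x_{k-1}) denotes the conditional c.d.f. of X_k given X_1 = x_1, ..., X_{k-1} = x_{k-1}. Then the components Z_1, ..., Z_K are independent and each is uniformly distributed on [0,1]. -/
open MeasureTheory ProbabilityTheory Set Filter Topology ENNReal

lemma map_cdf_uniform (ν : Measure ℝ) [IsProbabilityMeasure ν] (F : ℝ → ℝ)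
    (hcont : Continuous F) (hmono : StrictMono F)
    (hF : ∀ t, F t = (ν (Iic t)).toReal) :
    ν.map F = (volume : Measure ℝ).restrict (Icc 0 1) := by
  have h01 : ∀ t, F t ∈ Icc (0:ℝ) 1 := by
    intro t
    rw [hF]
    exact ⟨ENNReal.toReal_nonneg, ENNReal.toReal_le_of_le_ofReal zero_le_one
      (by simpa using prob_le_one (μ := ν) (s := Iic t))⟩
  have hpos : ∀ t, 0 < F t := by
    intro t
    by_contra h
    push_neg at h
    have h1 := hmono (show t - 1 < t by linarith)
    have h2 := (h01 (t-1)).1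
    linarith
  have hlt1 : ∀ t, F t < 1 := by
    intro t
    by_contra h
    push_neg at h
    have h1 := hmono (show t < t + 1 by linarith)
    have h2 := (h01 (t+1)).2
    linarith
  have htop : Tendsto F atTop (𝓝 1) := by
    have h1 : Tendsto (fun t => ν (Iic t)) atTop (𝓝 (ν univ)) := tendsto_measure_Iic_atTop ν
    rw [measure_univ] at h1
    have := (ENNReal.tendsto_toReal (by norm_num : (1:ENNReal) ≠ ⊤)).comp h1
    have heq : ENNReal.toReal ∘ (fun t => ν (Iic t)) = F := by
      funext t; simp [Function.comp, ← hF t]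
    rwa [heq] at this
  have hbot : Tendsto F atBot (𝓝 0) := by
    have hiInter : ⋂ t : ℝ, Iic t = (∅ : Set ℝ) := by
      apply eq_empty_iff_forall_notMem.2
      intro x hx
      have := mem_iInter.1 hx (x - 1)
      simp only [mem_Iic] at this
      linarith
    have h1 : Tendsto (fun t => ν (Iic t)) atBot (𝓝 (ν (⋂ t : ℝ, Iic t))) :=
      tendsto_measure_iInter_atBot (fun t => nullMeasurableSet_Iic)
        (fun a b hab => Iic_subset_Iic.2 hab) ⟨0, measure_ne_top ν _⟩
    rw [hiInter, measure_empty] at h1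
    have := (ENNReal.tendsto_toReal (by norm_num : (0:ENNReal) ≠ ⊤)).comp h1
    have heq : ENNReal.toReal ∘ (fun t => ν (Iic t)) = F := by
      funext t; simp [Function.comp, ← hF t]
    rwa [heq] at this
  have hmeas : Measurable F := hcont.measurable
  refine Measure.ext_of_Iic _ _ (fun u => ?_)
  rw [Measure.map_apply hmeas measurableSet_Iic, Measure.restrict_apply measurableSet_Iic]
  rcases le_or_gt u 0 with hu | hu
  · have h1 : F ⁻¹' Iic u = ∅ := by
      apply eq_empty_iff_forall_notMem.2
      intro y hy
      exact absurd (mem_Iic.1 hy) (not_le.2 (lt_of_le_of_lt hu (hpos y)))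
    rw [h1, measure_empty]
    have h2 : Iic u ∩ Icc 0 1 ⊆ Icc 0 u := fun x hx => ⟨hx.2.1, hx.1⟩
    refine (le_antisymm (le_trans (measure_mono h2) ?_) (zero_le (a := _))).symm
    rw [Real.volume_Icc]
    simp only [ENNReal.ofReal_eq_zero.2 (by linarith : u - 0 ≤ 0), le_refl]
  rcases le_or_gt 1 u with hu1 | hu1
  · have h1 : F ⁻¹' Iic u = univ := eq_univ_of_forall fun y => le_trans (hlt1 y).le hu1
    have h2 : Iic u ∩ Icc 0 1 = Icc (0:ℝ) 1 := inter_eq_self_of_subset_right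
      (fun x hx => le_trans hx.2 hu1)
    rw [h1, h2, measure_univ, Real.volume_Icc]
    norm_num
  · obtain ⟨a, ha⟩ : ∃ a, F a < u := (hbot.eventually_lt_const hu).exists
    obtain ⟨b, hb⟩ : ∃ b, u < F b := (htop.eventually_const_lt hu1).exists
    have hab : a ≤ b := le_of_lt (hmono.lt_iff_lt.1 (ha.trans hb))
    obtain ⟨t, _, ht⟩ := intermediate_value_Icc hab hcont.continuousOn
      (⟨ha.le, hb.le⟩ : u ∈ Icc (F a) (F b))
    have hpre : F ⁻¹' Iic u = Iic t := by
      ext y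
      simp only [mem_preimage, mem_Iic, ← ht]
      exact ⟨fun h => hmono.le_iff_le.1 h, fun h => hmono.monotone h⟩
    have hνt : ν (Iic t) = ENNReal.ofReal u := by
      rw [← ht, hF t, ENNReal.ofReal_toReal (measure_ne_top ν _)]
    have h2 : Iic u ∩ Icc 0 1 = Icc (0:ℝ) u := by
      ext x
      simp only [mem_inter_iff, mem_Iic, mem_Icc]
      exact ⟨fun h => ⟨h.2.1, h.1⟩, fun h => ⟨h.2, h.1, h.2.trans hu1.le⟩⟩
    rw [hpre, hνt, h2, Real.volume_Icc]
    norm_num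

lemma rosenblatt_step {Ω A : Type*} [MeasurableSpace Ω] [MeasurableSpace A]
    (P : Measure Ω) [IsProbabilityMeasure P]
    (W : Ω → A) (Y : Ω → ℝ) (hW : Measurable W) (hY : Measurable Y)
    (F : A → ℝ → ℝ)
    (hcont : ∀ x, Continuous (F x)) (hmono : ∀ x, StrictMono (F x))
    (hF : ∀ x t, F x t = ((condDistrib Y W P) x (Iic t)).toReal)
    (hFm : Measurable fun p : A × ℝ => F p.1 p.2)
    (A' : Set A) (hA' : MeasurableSet A') (s : Set ℝ) (hs : MeasurableSet s) :
    P {ω | W ω ∈ A' ∧ F (W ω) (Y ω) ∈ s} =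
      P (W ⁻¹' A') * (volume : Measure ℝ).restrict (Icc 0 1) s := by
  set κ := condDistrib Y W P with hκ
  have huni : ∀ x, (κ x).map (F x) = (volume : Measure ℝ).restrict (Icc 0 1) := fun x =>
    map_cdf_uniform (κ x) (F x) (hcont x) (hmono x) (fun t => hF x t)
  set E : Set (A × ℝ) := {p | p.1 ∈ A' ∧ F p.1 p.2 ∈ s} with hE
  have hEm : MeasurableSet E := (hA'.preimage measurable_fst).inter (hFm hs)
  have hpair : Measurable fun ω => (W ω, Y ω) := hW.prodMk hY
  have hset : {ω | W ω ∈ A' ∧ F (W ω) (Y ω) ∈ s} = (fun ω => (W ω, Y ω)) ⁻¹' E := rfl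
  haveI : IsProbabilityMeasure (P.map (fun ω => (W ω, Y ω))) :=
    Measure.isProbabilityMeasure_map hpair.aemeasurable
  have hdis : P.map (fun ω => (W ω, Y ω)) = (P.map W) ⊗ₘ κ := by
    rw [hκ]
    exact (compProd_map_condDistrib hY.aemeasurable).symm
  rw [hset, ← Measure.map_apply hpair hEm, hdis, Measure.compProd_apply hEm]
  have hint : ∀ x, κ x (Prod.mk x ⁻¹' E) =
      A'.indicator (fun _ => (volume : Measure ℝ).restrict (Icc 0 1) s) x := by
    intro x
    by_cases hx : x ∈ A'
    · have h1 : Prod.mk x ⁻¹' E = F x ⁻¹' s := by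
        ext t; simp [hE, hx]
      rw [h1, indicator_of_mem hx, ← huni x,
        Measure.map_apply (hcont x).measurable hs]
    · have h1 : Prod.mk x ⁻¹' E = ∅ := by
        ext t; simp [hE, hx]
      rw [h1, indicator_of_notMem hx, measure_empty]
  simp_rw [hint]
  rw [lintegral_indicator hA', setLIntegral_const, Measure.map_apply hW hA']
  ring

/-- **Rosenblatt transformation.** If `Z 1 = F₁(X₁)` and
`Z k = F_k(X_k | X_1, …, X_{k-1})`, where the conditional c.d.f.s are continuous and
strictly increasing, then the components of `Z` are independent and each is uniform
on `[0,1]`, i.e. the law of `Z` is the product of uniform distributions on `[0,1]`. -/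
theorem stmt_0 {Ω : Type*} [MeasurableSpace Ω]
    (P : Measure Ω) [IsProbabilityMeasure P]
    (K : ℕ) (X : Ω → Fin K → ℝ) (hX : Measurable X)
    (F : (k : Fin K) → (Fin k.val → ℝ) → ℝ → ℝ)
    (hF : ∀ (k : Fin K) (x : Fin k.val → ℝ) (t : ℝ),
      F k x t = ((condDistrib (fun ω => X ω k)
        (fun ω (i : Fin k.val) => X ω (Fin.castLE k.isLt.le i)) P) x (Iic t)).toReal)
    (hcont : ∀ (k : Fin K) (x : Fin k.val → ℝ), Continuous (F k x))
    (hmono : ∀ (k : Fin K) (x : Fin k.val → ℝ), StrictMono (F k x))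
    (Z : Ω → Fin K → ℝ)
    (hZ : ∀ ω k, Z ω k = F k (fun i => X ω (Fin.castLE k.isLt.le i)) (X ω k)) :
    Measure.map Z P =
      Measure.pi (fun _ : Fin K => (volume : Measure ℝ).restrict (Icc 0 1)) := by
  have hXk : ∀ k : Fin K, Measurable fun ω => X ω k :=
    fun k => (measurable_pi_apply k).comp hX
  have hWm : ∀ k : Fin K, Measurable (fun ω (i : Fin k.val) => X ω (Fin.castLE k.isLt.le i)) :=
    fun k => measurable_pi_lambda _ fun i => hXk _
  -- joint measurability of F k
  have hFjm : ∀ k : Fin K, Measurable fun p : (Fin k.val → ℝ) × ℝ => F k p.1 p.2 := by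
    intro k
    have heq : (fun p : (Fin k.val → ℝ) × ℝ => F k p.1 p.2) =
        fun p => ((condDistrib (fun ω => X ω k)
          (fun ω (i : Fin k.val) => X ω (Fin.castLE k.isLt.le i)) P) p.1 (Iic p.2)).toReal := by
      funext p; exact hF k p.1 p.2
    rw [heq]
    apply ENNReal.measurable_toReal.comp
    set κ := condDistrib (fun ω => X ω k)
      (fun ω (i : Fin k.val) => X ω (Fin.castLE k.isLt.le i)) P
    have hmk : Measurable fun p : (Fin k.val → ℝ) × ℝ =>
        (κ.comap Prod.fst measurable_fst) p (Prod.mk p ⁻¹' {q : ((Fin k.val → ℝ) × ℝ) × ℝ | q.2 ≤ q.1.2}) :=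
      Kernel.measurable_kernel_prodMk_left (measurableSet_le measurable_snd measurable_fst.snd)
    exact hmk
  have hZk : ∀ k : Fin K, Measurable fun ω => Z ω k := by
    intro k
    have heq : (fun ω => Z ω k) =
        (fun p : (Fin k.val → ℝ) × ℝ => F k p.1 p.2) ∘
          (fun ω => ((fun i => X ω (Fin.castLE k.isLt.le i)), X ω k)) := by
      funext ω; exact hZ ω k
    rw [heq]
    exact (hFjm k).comp ((hWm k).prodMk (hXk k))
  have hZm : Measurable Z := measurable_pi_lambda _ hZk
  refine (Measure.pi_eq fun s hs => ?_).symm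
  rw [Measure.map_apply hZm (MeasurableSet.univ_pi fun k => hs k)]
  have main : ∀ m : ℕ, m ≤ K → P {ω | ∀ k : Fin K, (k : ℕ) < m → Z ω k ∈ s k}
      = ∏ k ∈ Finset.univ.filter (fun k : Fin K => (k : ℕ) < m),
          (volume : Measure ℝ).restrict (Icc 0 1) (s k) := by
    intro m
    induction m with
    | zero => intro _; simp
    | succ m ih =>
      intro hm1
      have hmK : m < K := hm1
      set km : Fin K := ⟨m, hmK⟩ with hkm
      set W : Ω → (Fin km.val → ℝ) := fun ω i => X ω (Fin.castLE km.isLt.le i) with hWdef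
      set A' : Set (Fin km.val → ℝ) :=
        {x | ∀ (k : Fin K) (hk : (k : ℕ) < m),
          F k (fun i => x (Fin.castLE (le_of_lt hk) i)) (x ⟨(k : ℕ), hk⟩) ∈ s k} with hA'def
      have hA'm : MeasurableSet A' := by
        have heq : A' = ⋂ (k : Fin K), ⋂ (hk : (k : ℕ) < m),
            {x : Fin km.val → ℝ |
              F k (fun i => x (Fin.castLE (le_of_lt hk) i)) (x ⟨(k : ℕ), hk⟩) ∈ s k} := by
          ext x; simp only [hA'def, mem_setOf_eq, mem_iInter]
        rw [heq]
        refine MeasurableSet.iInter fun k => MeasurableSet.iInter fun hk => ?_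
        have hgm : Measurable (fun x : Fin km.val → ℝ =>
            ((fun i : Fin k.val => x (Fin.castLE (le_of_lt hk) i)), x ⟨(k : ℕ), hk⟩)) :=
          (measurable_pi_lambda _ fun i => measurable_pi_apply _).prodMk
            (measurable_pi_apply _)
        exact (hFjm k).comp hgm (hs k)
      have hsetA : W ⁻¹' A' = {ω | ∀ k : Fin K, (k : ℕ) < m → Z ω k ∈ s k} := by
        ext ω
        simp only [mem_preimage, hA'def, mem_setOf_eq]
        constructor
        · intro h k hk
          rw [hZ ω k]
          exact h k hk
        · intro h k hk
          have := h k hk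
          rw [hZ ω k] at this
          exact this
      have hsetB : {ω | ∀ k : Fin K, (k : ℕ) < m + 1 → Z ω k ∈ s k} =
          {ω | W ω ∈ A' ∧ F km (W ω) (X ω km) ∈ s km} := by
        ext ω
        simp only [mem_setOf_eq, hA'def, mem_preimage]
        constructor
        · intro h
          refine ⟨fun k hk => ?_, ?_⟩
          · have := h k (hk.trans (Nat.lt_succ_self m))
            rw [hZ ω k] at this
            exact this
          · have := h km (Nat.lt_succ_self m)
            rw [hZ ω km] at this
            exact this
        · rintro ⟨h1, h2⟩ k hk
          rcases Nat.lt_succ_iff_lt_or_eq.1 hk with hk' | hk'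
          · rw [hZ ω k]
            exact h1 k hk'
          · have hkk : k = km := Fin.ext hk'
            rw [hkk, hZ ω km]
            exact h2
      have hstep := rosenblatt_step P W (fun ω => X ω km) (hWm km) (hXk km) (F km)
        (hcont km) (hmono km) (hF km) (hFjm km) A' hA'm (s km) (hs km)
      have hfil : Finset.univ.filter (fun k : Fin K => (k : ℕ) < m + 1) =
          insert km (Finset.univ.filter (fun k : Fin K => (k : ℕ) < m)) := by
        ext k
        simp only [Finset.mem_filter, Finset.mem_univ, true_and, Finset.mem_insert]
        constructor
        · intro hk
          rcases Nat.lt_succ_iff_lt_or_eq.1 hk with hk' | hk'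
          · exact Or.inr hk'
          · exact Or.inl (Fin.ext hk')
        · rintro (hk | hk)
          · subst hk; exact Nat.lt_succ_self m
          · exact hk.trans (Nat.lt_succ_self m)
      have hnot : km ∉ Finset.univ.filter (fun k : Fin K => (k : ℕ) < m) := by
        simp [hkm]
      rw [hsetB, hstep, hsetA, ih (le_of_lt hmK), hfil, Finset.prod_insert hnot]
      ring
  have hK : Z ⁻¹' (pi univ s) = {ω | ∀ k : Fin K, (k : ℕ) < K → Z ω k ∈ s k} := by
    ext ω
    simp only [mem_preimage, mem_univ_pi, mem_setOf_eq]
    exact ⟨fun h k _ => h k, fun h k => h k k.isLt⟩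
  have hfull : Finset.univ.filter (fun k : Fin K => (k : ℕ) < K) = Finset.univ := by
    ext k; simp [k.isLt]
  rw [hK, main K le_rfl, hfull]
end

section
/- Let μ be the two-point mixture on [0,1]² given by the joint density of two rows of a one-dimensional Latin hypercube sample of size N: f(z_1, z_2) = (N/(N-1)) · (1 - G_N(z_1, z_2)), where G_N(z_1, z_2) = 1 if ⌊N z_1⌋ = ⌊N z_2⌋ and 0 otherwise. Then for any integrable g : [0,1] → ℝ with ∫_0^1 g = 0, the covariance under this density satisfies ∫∫ g(z_1) g(z_2) f(z_1, z_2) dz_1 dz_2 = -(N/(N-1)) Σ_{j=1}^N (∫_{I_j} g)² ≤ 0, where I_j = [(j-1)/N, j/N]. In particular, distinct Latin hypercube sample points are negatively correlated for any centered integrable function. -/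
/-!
Write `c = N/(N-1)` and `a_k = ∫_{I_k} g`. Since `f = c (1 - G_N)` and `∫₀¹ g = 0`, the inner
integral at `z₁` is `-c g(z₁) a_k` where `I_k` is the stratum containing `z₁`; integrating this
stratum by stratum gives `-c Σ_k a_k²`.
-/

open MeasureTheory Set

/-- The uniform distribution on `[0,1]`. -/
noncomputable def unif : Measure ℝ := (volume : Measure ℝ).restrict (Icc 0 1)

/-- Same-stratum indicator: `G_N(y₁,y₂) = 1` if `⌊N y₁⌋ = ⌊N y₂⌋`, else `0`. -/
noncomputable def Gind (N : ℕ) (y₁ y₂ : ℝ) : ℝ :=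
  if ⌊(N : ℝ) * y₁⌋ = ⌊(N : ℝ) * y₂⌋ then 1 else 0

/-- The paper's `I_j` is `stratum N (j - 1)`, up to an endpoint. -/
def stratum (N : ℕ) (k : ℤ) : Set ℝ := Ico ((k : ℝ) / N) (((k : ℝ) + 1) / N)

open Function

section Stratum

variable {N : ℕ}

theorem measurableSet_stratum (k : ℤ) : MeasurableSet (stratum N k) := measurableSet_Ico

theorem floor_mul_eq_iff_mem_stratum (hN : 0 < N) (k : ℤ) (y : ℝ) :
    ⌊(N : ℝ) * y⌋ = k ↔ y ∈ stratum N k := by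
  have hN' : (0 : ℝ) < N := Nat.cast_pos.mpr hN
  rw [stratum, Int.floor_eq_iff, mem_Ico, div_le_iff₀ hN', lt_div_iff₀ hN', mul_comm (N : ℝ) y]

theorem pairwise_disjoint_stratum (hN : 0 < N) : Pairwise (Disjoint on stratum N) := by
  intro j k hjk
  refine disjoint_left.mpr fun y hj hk => hjk ?_
  rw [← floor_mul_eq_iff_mem_stratum hN] at hj hk
  exact hj.symm.trans hk

theorem biUnion_range_stratum (hN : 0 < N) :
    ⋃ k ∈ Finset.range N, stratum N k = Ico 0 1 := by
  have hN' : (0 : ℝ) < N := Nat.cast_pos.mpr hN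
  ext y
  simp only [mem_iUnion, Finset.mem_range, exists_prop, ← floor_mul_eq_iff_mem_stratum hN,
    mem_Ico]
  constructor
  · rintro ⟨k, hkN, hk⟩
    rw [Int.floor_eq_iff, Int.cast_natCast] at hk
    have hkN' : (k : ℝ) + 1 ≤ N := by exact_mod_cast hkN
    constructor <;> nlinarith [(Nat.cast_nonneg k : (0 : ℝ) ≤ k)]
  · rintro ⟨hy0, hy1⟩
    have h0 : 0 ≤ ⌊(N : ℝ) * y⌋ := Int.floor_nonneg.mpr (by positivity)
    have h1 : ⌊(N : ℝ) * y⌋ < N := Int.floor_lt.mpr (by push_cast; nlinarith)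
    exact ⟨⌊(N : ℝ) * y⌋.toNat, by omega, by omega⟩

theorem stratum_subset_Ico (hN : 0 < N) {k : ℕ} (hk : k < N) : stratum N k ⊆ Ico 0 1 :=
  biUnion_range_stratum hN ▸ subset_biUnion_of_mem (u := fun k : ℕ => stratum N k)
    (Finset.mem_coe.mpr (Finset.mem_range.mpr hk))

theorem Gind_eq_indicator_stratum (hN : 0 < N) (y₁ y₂ : ℝ) :
    Gind N y₁ y₂ = (stratum N ⌊(N : ℝ) * y₁⌋).indicator 1 y₂ := by
  simp only [Gind, indicator, ← floor_mul_eq_iff_mem_stratum hN, eq_comm, Pi.one_apply]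

end Stratum

theorem integral_mul_one_sub_indicator {α : Type*} [MeasurableSpace α] {μ : Measure α}
    {g : α → ℝ} (hg : Integrable g μ) (hmean : ∫ x, g x ∂μ = 0) {s : Set α}
    (hs : MeasurableSet s) :
    ∫ x, g x * (1 - s.indicator 1 x) ∂μ = -∫ x in s, g x ∂μ := by
  have hpt : ∀ x, g x * (1 - s.indicator 1 x) = g x - s.indicator g x := by
    intro x
    by_cases hx : x ∈ s <;> simp [hx]
  simp only [hpt]
  rw [integral_sub hg (hg.indicator hs), hmean, integral_indicator hs, zero_sub]

section Integral

variable {N : ℕ} {μ : Measure ℝ} {g : ℝ → ℝ}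

theorem setIntegral_Ico_mul_comp_floor (hN : 0 < N) (hg : IntegrableOn g (Ico 0 1) μ)
    (φ : ℤ → ℝ) :
    ∫ z in Ico 0 1, g z * φ ⌊(N : ℝ) * z⌋ ∂μ
      = ∑ k ∈ Finset.range N, φ k * ∫ z in stratum N k, g z ∂μ := by
  have hconst : ∀ k : ℕ, EqOn (fun z => g z * φ ⌊(N : ℝ) * z⌋) (fun z => g z * φ k)
      (stratum N k) := fun k z hz => by
    simp only [(floor_mul_eq_iff_mem_stratum hN k z).mpr hz]
  rw [← biUnion_range_stratum hN, integral_biUnion_finset (Finset.range N)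
    (fun k _ => measurableSet_stratum k)
    (fun j _ k _ hjk => pairwise_disjoint_stratum hN (by exact_mod_cast hjk))
    fun k hk => IntegrableOn.congr_fun
      ((hg.mono_set (stratum_subset_Ico hN (Finset.mem_range.mp hk))).mul_const (φ k))
      (hconst k).symm (measurableSet_stratum k)]
  refine Finset.sum_congr rfl fun k _ => ?_
  rw [setIntegral_congr_fun (measurableSet_stratum k) (hconst k), integral_mul_const, mul_comm]

theorem unif_restrict_Ico : unif.restrict (Ico 0 1) = unif := by
  rw [unif, Measure.restrict_restrict measurableSet_Ico,
    inter_eq_self_of_subset_left Ico_subset_Icc_self]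
  exact Measure.restrict_congr_set Ico_ae_eq_Icc

theorem integral_unif_eq_setIntegral_Ico (F : ℝ → ℝ) :
    ∫ z, F z ∂unif = ∫ z in Ico 0 1, F z ∂unif := by
  rw [unif_restrict_Ico]

theorem setIntegral_stratum_unif (hN : 0 < N) {k : ℕ} (hk : k < N) :
    ∫ z in stratum N k, g z ∂unif = ∫ z in (k : ℝ) / N..((k : ℝ) + 1) / N, g z := by
  have hle : (k : ℝ) / N ≤ ((k : ℝ) + 1) / N := by gcongr; linarith
  rw [unif, Measure.restrict_restrict (measurableSet_stratum k),
    inter_eq_self_of_subset_left ((stratum_subset_Ico hN hk).trans Ico_subset_Icc_self),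
    stratum, Int.cast_natCast,
    integral_Ico_eq_integral_Ioo, intervalIntegral.integral_of_le hle,
    integral_Ioc_eq_integral_Ioo]

end Integral

/-- **Negative correlation of distinct Latin hypercube points.** Under the joint density
`f(z₁,z₂) = (N/(N-1))(1 - G_N(z₁,z₂))` of two rows of a one-dimensional Latin hypercube
sample of size `N`, for any integrable `g : [0,1] → ℝ` with `∫₀¹ g = 0` one has
`∫∫ g(z₁) g(z₂) f(z₁,z₂) dz₁ dz₂ = -(N/(N-1)) Σ_{j=1}^N (∫_{I_j} g)² ≤ 0`,
where `I_j = [(j-1)/N, j/N]`. -/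
theorem stmt_19 (N : ℕ) (hN : 2 ≤ N)
    (f : ℝ → ℝ → ℝ)
    (hf : ∀ z₁ z₂, f z₁ z₂ = ((N : ℝ)/((N : ℝ) - 1)) * (1 - Gind N z₁ z₂))
    (g : ℝ → ℝ) (hg : Integrable g unif) (hmean : ∫ z, g z ∂unif = 0) :
    (∫ z₁, ∫ z₂, g z₁ * g z₂ * f z₁ z₂ ∂unif ∂unif
      = -((N : ℝ)/((N : ℝ) - 1)) *
          ∑ j ∈ Finset.range N, (∫ z in ((j : ℝ)/N)..(((j : ℝ)+1)/N), g z)^2) ∧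
    (∫ z₁, ∫ z₂, g z₁ * g z₂ * f z₁ z₂ ∂unif ∂unif ≤ 0) := by
  have hN0 : 0 < N := by omega
  set c : ℝ := (N : ℝ) / ((N : ℝ) - 1)
  have hc : 0 ≤ c := div_nonneg (Nat.cast_nonneg N) (by
    have : (2 : ℝ) ≤ N := by exact_mod_cast hN
    linarith)
  have hinner : ∀ z₁, ∫ z₂, g z₁ * g z₂ * f z₁ z₂ ∂unif
      = -c * (g z₁ * ∫ z₂ in stratum N ⌊(N : ℝ) * z₁⌋, g z₂ ∂unif) := fun z₁ => by
    simp only [hf, Gind_eq_indicator_stratum hN0]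
    calc ∫ z₂, g z₁ * g z₂ * (c * (1 - (stratum N ⌊(N : ℝ) * z₁⌋).indicator 1 z₂)) ∂unif
        = c * g z₁ * ∫ z₂, g z₂ * (1 - (stratum N ⌊(N : ℝ) * z₁⌋).indicator 1 z₂) ∂unif := by
          rw [← integral_const_mul]; congr 1 with z₂; ring
      _ = _ := by
          rw [integral_mul_one_sub_indicator hg hmean (measurableSet_stratum _)]; ring
  have key : ∫ z₁, ∫ z₂, g z₁ * g z₂ * f z₁ z₂ ∂unif ∂unif
      = -c * ∑ j ∈ Finset.range N, (∫ z in ((j : ℝ)/N)..(((j : ℝ)+1)/N), g z)^2 := by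
    simp only [hinner]
    rw [integral_const_mul, integral_unif_eq_setIntegral_Ico,
      setIntegral_Ico_mul_comp_floor hN0 hg.integrableOn fun k => ∫ z in stratum N k, g z ∂unif]
    refine congrArg _ (Finset.sum_congr rfl fun j hj => ?_)
    rw [setIntegral_stratum_unif hN0 (Finset.mem_range.mp hj), sq]
  exact ⟨key, key ▸ mul_nonpos_of_nonpos_of_nonneg (neg_nonpos.mpr hc)
    (Finset.sum_nonneg fun j _ => sq_nonneg _)⟩
end
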